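/- Let α, β > 0, ω ∈ ℝ, let n be a nonzero integer, and define P(t) = t⁴·ln(t²/β) − t⁴/2. Suppose u ∈ C²((0,∞)) satisfies the Gross–Pitaevskii vortex equation u''(r) + u'(r)/r − (n²/r² + 2ω)·u(r) − 2α·u(r)³·ln(u(r)²/β) = 0 on (0,∞). Then for all 0 < r₁ < r₂ < ∞: r₂²·u'(r₂)² − r₁²·u'(r₁)² = n²·(u(r₂)² − u(r₁)²) + 2ω·(r₂²·u(r₂)² − r₁²·u(r₁)²) + α·(r₂²·P(u(r₂)) − r₁²·P(u(r₁))) − 4ω·∫_{r₁}^{r₂} u(r)² r dr − 2α·∫_{r₁}^{r₂} P(u(r)) r dr. -/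

import Mathlib

/-!
Multiplying the equation `u'' + u'/r = (n²/r²) u + G'(u)`, where `G(t) = ω t² + (α/2) P(t)`, by
`r² u'` gives `(r² u'²)' = (n² u²)' + 2 (r² G(u))' - 4 r G(u)`; integrating over `[r₁, r₂]` yields
the identity. The only analytic subtlety is that `P` is `C¹` at `0` despite the logarithm, because
`s log s` is continuous at `0`.
-/

open MeasureTheory Filter Set Real

theorem continuous_pow_three_mul_log_sq_div {β : ℝ} (hβ : β ≠ 0) :
    Continuous fun t : ℝ => t ^ 3 * log (t ^ 2 / β) := by
  have hcont : Continuous fun t : ℝ => β * t * ((t ^ 2 / β) * log (t ^ 2 / β)) := by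
    fun_prop
  convert hcont using 2 with t
  field_simp

theorem hasDerivAt_pow_four_mul_log_sq_div {β : ℝ} (hβ : β ≠ 0) (t : ℝ) :
    HasDerivAt (fun s : ℝ => s ^ 4 * log (s ^ 2 / β) - s ^ 4 / 2)
      (4 * t ^ 3 * log (t ^ 2 / β)) t := by
  have h3 := continuous_pow_three_mul_log_sq_div hβ
  refine hasDerivAt_of_hasDerivAt_of_ne' (g := fun t => 4 * t ^ 3 * log (t ^ 2 / β)) (x := 0)
    (fun s hs => ?_) ?_ ?_ t
  · have hlog : HasDerivAt (fun s : ℝ => log (s ^ 2 / β)) (2 * s / s ^ 2) s := by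
      convert ((hasDerivAt_pow 2 s).div_const β).log (by positivity) using 1
      field_simp
      norm_num
    refine (((hasDerivAt_pow 4 s).mul hlog).sub ((hasDerivAt_pow 4 s).div_const 2)).congr_deriv ?_
    field_simp
    ring
  · have hf : Continuous fun s : ℝ => s * (s ^ 3 * log (s ^ 2 / β)) - s ^ 4 / 2 :=
      (continuous_id.mul h3).sub ((continuous_pow 4).div_const 2)
    exact hf.continuousAt.congr (Eventually.of_forall fun s => by ring)
  · exact (h3.const_mul 4).continuousAt.congr (Eventually.of_forall fun s => by ring)

section RadialPohozaev

variable {u u' u'' G g : ℝ → ℝ} {c r : ℝ}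

theorem hasDerivAt_radial_energy (hr : 0 < r) (hu' : HasDerivAt u (u' r) r)
    (hu'' : HasDerivAt u' (u'' r) r) (hG : HasDerivAt G (g (u r)) (u r))
    (heq : u'' r + u' r / r = c / r ^ 2 * u r + g (u r)) :
    HasDerivAt (fun s => s ^ 2 * u' s ^ 2 - c * u s ^ 2 - 2 * (s ^ 2 * G (u s)))
      (-4 * (G (u r) * r)) r := by
  have hsq : HasDerivAt (fun s : ℝ => s ^ 2) (2 * r) r := by
    simpa using hasDerivAt_pow 2 r
  refine (((hsq.mul (hu''.pow 2)).sub ((hu'.pow 2).const_mul c)).sub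
    ((hsq.mul (hG.comp r hu')).const_mul 2)).congr_deriv ?_
  have hu''_eq : u'' r = c / r ^ 2 * u r + g (u r) - u' r / r := by linarith
  simp only [Pi.pow_apply, Function.comp_apply, hu''_eq]
  field_simp
  ring

theorem radial_pohozaev_identity {r₁ r₂ : ℝ} (h₀ : 0 < r₁) (h₁₂ : r₁ ≤ r₂)
    (hu' : ∀ r ∈ Icc r₁ r₂, HasDerivAt u (u' r) r)
    (hu'' : ∀ r ∈ Icc r₁ r₂, HasDerivAt u' (u'' r) r) (hG : ∀ t, HasDerivAt G (g t) t)
    (heq : ∀ r ∈ Icc r₁ r₂, u'' r + u' r / r = c / r ^ 2 * u r + g (u r)) :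
    r₂ ^ 2 * u' r₂ ^ 2 - r₁ ^ 2 * u' r₁ ^ 2
      = c * (u r₂ ^ 2 - u r₁ ^ 2) + 2 * (r₂ ^ 2 * G (u r₂) - r₁ ^ 2 * G (u r₁))
        - 4 * ∫ r in r₁..r₂, G (u r) * r := by
  rw [← uIcc_of_le h₁₂] at hu' hu'' heq
  have hGu : ContinuousOn (fun r => G (u r) * r) (uIcc r₁ r₂) :=
    (continuous_iff_continuousAt.2 fun t => (hG t).continuousAt).comp_continuousOn
      (fun r hr => (hu' r hr).continuousAt.continuousWithinAt) |>.mul continuousOn_id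
  have hftc := intervalIntegral.integral_eq_sub_of_hasDerivAt
    (fun r hr => hasDerivAt_radial_energy (h₀.trans_le (uIcc_of_le h₁₂ ▸ hr).1) (hu' r hr)
      (hu'' r hr) (hG _) (heq r hr))
    (hGu.const_mul (-4)).intervalIntegrable
  rw [intervalIntegral.integral_const_mul] at hftc
  linarith

end RadialPohozaev

theorem gp_energy_identity_general
    (α β : ℝ) (hβ : 0 < β) (ω : ℝ) (n : ℤ)
    (P : ℝ → ℝ)
    (hP : ∀ t, P t = t ^ 4 * Real.log (t ^ 2 / β) - t ^ 4 / 2)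
    (u u' u'' : ℝ → ℝ)
    (hu' : ∀ r ∈ Set.Ioi (0 : ℝ), HasDerivAt u (u' r) r)
    (hu'' : ∀ r ∈ Set.Ioi (0 : ℝ), HasDerivAt u' (u'' r) r)
    (heq : ∀ r ∈ Set.Ioi (0 : ℝ),
      u'' r + u' r / r - ((n : ℝ) ^ 2 / r ^ 2 + 2 * ω) * u r
        - 2 * α * (u r) ^ 3 * Real.log ((u r) ^ 2 / β) = 0) :
    ∀ r₁ r₂ : ℝ, 0 < r₁ → r₁ < r₂ →
      r₂ ^ 2 * (u' r₂) ^ 2 - r₁ ^ 2 * (u' r₁) ^ 2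
        = (n : ℝ) ^ 2 * ((u r₂) ^ 2 - (u r₁) ^ 2)
          + 2 * ω * (r₂ ^ 2 * (u r₂) ^ 2 - r₁ ^ 2 * (u r₁) ^ 2)
          + α * (r₂ ^ 2 * P (u r₂) - r₁ ^ 2 * P (u r₁))
          - 4 * ω * (∫ r in Set.Ioc r₁ r₂, (u r) ^ 2 * r)
          - 2 * α * (∫ r in Set.Ioc r₁ r₂, P (u r) * r) := by
  intro r₁ r₂ h₀ h₁₂
  have hPd (t : ℝ) : HasDerivAt P (4 * t ^ 3 * log (t ^ 2 / β)) t := by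
    rw [funext hP]
    exact hasDerivAt_pow_four_mul_log_sq_div hβ.ne' t
  have hG (t : ℝ) : HasDerivAt (fun t => ω * t ^ 2 + α / 2 * P t)
      (2 * ω * t + 2 * α * t ^ 3 * log (t ^ 2 / β)) t := by
    refine (((hasDerivAt_pow 2 t).const_mul ω).add ((hPd t).const_mul (α / 2))).congr_deriv ?_
    push_cast
    ring
  have hpos : Icc r₁ r₂ ⊆ Ioi 0 := fun r hr => h₀.trans_le hr.1
  have hpohozaev := radial_pohozaev_identity (c := (n : ℝ) ^ 2) h₀ h₁₂.le
    (fun r hr => hu' r (hpos hr)) (fun r hr => hu'' r (hpos hr)) hG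
    (fun r hr => by linear_combination heq r (hpos hr))
  have hu : ContinuousOn u (uIcc r₁ r₂) := fun r hr =>
    (hu' r (hpos (uIcc_of_le h₁₂.le ▸ hr))).continuousAt.continuousWithinAt
  have hP_cont : Continuous P := continuous_iff_continuousAt.2 fun t => (hPd t).continuousAt
  have hint₁ : IntervalIntegrable (fun r => u r ^ 2 * r) volume r₁ r₂ :=
    ((hu.pow 2).mul continuousOn_id).intervalIntegrable
  have hint₂ : IntervalIntegrable (fun r => P (u r) * r) volume r₁ r₂ :=
    ((hP_cont.comp_continuousOn hu).mul continuousOn_id).intervalIntegrable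
  simp only [add_mul, mul_assoc] at hpohozaev
  rw [intervalIntegral.integral_add (hint₁.const_mul ω) (hint₂.const_mul (α / 2)),
    intervalIntegral.integral_const_mul, intervalIntegral.integral_const_mul,
    intervalIntegral.integral_of_le h₁₂.le, intervalIntegral.integral_of_le h₁₂.le] at hpohozaev
  linear_combination hpohozaev

/-- Pohozaev-type integral identity for solutions of the Gross–Pitaevskii
vortex equation, with `P(t) = t⁴ ln(t²/β) − t⁴/2`. -/
theorem gp_energy_identity
    (α β : ℝ) (hα : 0 < α) (hβ : 0 < β) (ω : ℝ) (n : ℤ) (hn : n ≠ 0)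
    (P : ℝ → ℝ)
    (hP : ∀ t, P t = t ^ 4 * Real.log (t ^ 2 / β) - t ^ 4 / 2)
    (u u' u'' : ℝ → ℝ)
    (hu' : ∀ r ∈ Set.Ioi (0 : ℝ), HasDerivAt u (u' r) r)
    (hu'' : ∀ r ∈ Set.Ioi (0 : ℝ), HasDerivAt u' (u'' r) r)
    (hu''c : ContinuousOn u'' (Set.Ioi (0 : ℝ)))
    (heq : ∀ r ∈ Set.Ioi (0 : ℝ),
      u'' r + u' r / r - ((n : ℝ) ^ 2 / r ^ 2 + 2 * ω) * u r
        - 2 * α * (u r) ^ 3 * Real.log ((u r) ^ 2 / β) = 0) :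
    ∀ r₁ r₂ : ℝ, 0 < r₁ → r₁ < r₂ →
      r₂ ^ 2 * (u' r₂) ^ 2 - r₁ ^ 2 * (u' r₁) ^ 2
        = (n : ℝ) ^ 2 * ((u r₂) ^ 2 - (u r₁) ^ 2)
          + 2 * ω * (r₂ ^ 2 * (u r₂) ^ 2 - r₁ ^ 2 * (u r₁) ^ 2)
          + α * (r₂ ^ 2 * P (u r₂) - r₁ ^ 2 * P (u r₁))
          - 4 * ω * (∫ r in Set.Ioc r₁ r₂, (u r) ^ 2 * r)
          - 2 * α * (∫ r in Set.Ioc r₁ r₂, P (u r) * r) :=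
  gp_energy_identity_general α β hβ ω n P hP u u' u'' hu' hu'' heq
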